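/- For all α > 0 and θ > 0 there exist ε₀ > 0 and n₀ ∈ ℕ such that the following holds for all 0 < ε ≤ ε₀ and all n ≥ n₀: every n-vertex 3-graph H that is (1/3 + α, ε)-dense contains a matching covering all but at most θn vertices of V(H). -/

import Mathlib

/-!
Take a maximum matching `M`. If more than `θn` vertices are uncovered, the low-codegree pairs
are too few to prevent choosing `k ≥ 1/α` disjoint uncovered pairs of codegree at least
`(1/3 + α)n`. By maximality every common neighbour of such a pair lies in `V(M)`, so these
neighbourhoods have total size at least `k(1/3 + α)n > (k + 2)|M|`. Double counting over the
edges of `M` gives an edge `e ∈ M` meeting the neighbourhoods of two of the pairs in two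
vertices each; exchanging `e` for one edge through each pair enlarges `M`.
-/

open Finset

variable {V : Type*} [DecidableEq V] [Fintype V]

/-- A tight path in a 3-graph `H`: a list of distinct vertices in which every 3
consecutive vertices form an edge of `H`. -/
def IsTightPath (H : Finset (Finset V)) (l : List V) : Prop :=
  l.Nodup ∧ ∀ (i : ℕ) (h : i + 2 < l.length),
    ({l[i]'(by omega), l[i + 1]'(by omega), l[i + 2]'(by omega)} : Finset V) ∈ H

/-- The codegree of a pair of vertices. -/
def codeg (H : Finset (Finset V)) (u v : V) : ℕ :=
  (H.filter fun e => u ∈ e ∧ v ∈ e).card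

/-- The first end of a tight path `v₁ v₂ ⋯ v_p`, i.e. the ordered pair `(v₂, v₁)`. -/
def firstEnd (l : List V) : Option (V × V) :=
  match l with
  | a :: b :: _ => some (b, a)
  | _ => none

/-- The last end of a tight path `v₁ v₂ ⋯ v_p`, i.e. the ordered pair `(v_{p-1}, v_p)`. -/
def lastEnd (l : List V) : Option (V × V) :=
  firstEnd l.reverse

/-- The set of vertices covered by a family of paths. -/
def famVerts (Ps : List (List V)) : Finset V :=
  Ps.foldr (fun P s => P.toFinset ∪ s) ∅

/-- A family of pairwise vertex-disjoint tight paths. -/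
def PathFamily (H : Finset (Finset V)) (Ps : List (List V)) : Prop :=
  (∀ P ∈ Ps, IsTightPath H P) ∧
  Ps.Pairwise fun P Q => Disjoint P.toFinset Q.toFinset

/-- Two families of paths have the same length and corresponding members have the same ends. -/
def SameEndsList (Ps Qs : List (List V)) : Prop :=
  Ps.length = Qs.length ∧ ∀ j < Ps.length,
    firstEnd (Ps.getD j []) = firstEnd (Qs.getD j []) ∧
    lastEnd (Ps.getD j []) = lastEnd (Qs.getD j [])

/-- `u` and `v` are `(β, i)`-reachable in `H`. -/
def Reachable (H : Finset (Finset V)) (β : ℝ) (i : ℕ) (u v : V) : Prop :=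
  β * (Fintype.card V : ℝ) ^ (5 * i - 1) ≤
    (({T : Finset V | T.card = 5 * i - 1 ∧
      ∃ Ps Qs : List (List V), Ps.length = i ∧
        (∀ P ∈ Ps, IsTightPath H P ∧ P.length = 5) ∧
        (∀ Q ∈ Qs, IsTightPath H Q ∧ Q.length = 5) ∧
        Ps.Pairwise (fun P P' => Disjoint P.toFinset P'.toFinset) ∧
        Qs.Pairwise (fun Q Q' => Disjoint Q.toFinset Q'.toFinset) ∧
        famVerts Ps = insert u T ∧ famVerts Qs = insert v T ∧
        SameEndsList Ps Qs} : Set (Finset V)).ncard : ℝ)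

/-- The set `Ñ_{β,i}(v)` of vertices `(β,i)`-reachable to `v`. -/
def reachSet (H : Finset (Finset V)) (β : ℝ) (i : ℕ) (v : V) : Set V :=
  {u | u ≠ v ∧ Reachable H β i u v}

/-- A vertex set is `(β, i)`-closed in `H`. -/
def IsClosedSet (H : Finset (Finset V)) (β : ℝ) (i : ℕ) (U : Finset V) : Prop :=
  ∀ u ∈ U, ∀ v ∈ U, u ≠ v → Reachable H β i u v

/-- `Ps` is an `S`-absorber in `H`. -/
def IsAbsorber (H : Finset (Finset V)) (S : Finset V) (Ps : List (List V)) : Prop :=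
  PathFamily H Ps ∧ Disjoint (famVerts Ps) S ∧
  ∃ Qs : List (List V), PathFamily H Qs ∧ famVerts Qs = famVerts Ps ∪ S ∧
    SameEndsList Ps Qs

/-- Two edges of `H` sharing exactly two vertices. -/
def EdgeAdj (H : Finset (Finset V)) (e f : Finset V) : Prop :=
  e ∈ H ∧ f ∈ H ∧ (e ∩ f).card = 2

/-- Two edges lie in the same tight component: they are joined by a pseudo-path. -/
def SameTightComponent (H : Finset (Finset V)) (e f : Finset V) : Prop :=
  e ∈ H ∧ f ∈ H ∧ Relation.ReflTransGen (EdgeAdj H) e f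

/-- `H` has at most two tight components: among any three edges two lie in a common
tight component. -/
def AtMostTwoTightComponents (H : Finset (Finset V)) : Prop :=
  ∀ e ∈ H, ∀ f ∈ H, ∀ g ∈ H,
    SameTightComponent H e f ∨ SameTightComponent H e g ∨ SameTightComponent H f g

/-- The number of edges of `H` containing the set `p`. -/
def degPair (H : Finset (Finset V)) (p : Finset V) : ℕ :=
  (H.filter fun e => p ⊆ e).card

/-- `H` is `(μ, θ)`-dense: all but at most `θ * C(n,2)` pairs have codegree at least `μ n`. -/
def Dense3 (H : Finset (Finset V)) (μ θ : ℝ) : Prop :=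
  (({p : Finset V | p.card = 2 ∧ (degPair H p : ℝ) < μ * Fintype.card V} :
      Set (Finset V)).ncard : ℝ) ≤ θ * ((Fintype.card V).choose 2)

/-- `H` is strongly `(μ, θ)`-dense. -/
def StronglyDense3 (H : Finset (Finset V)) (μ θ : ℝ) : Prop :=
  Dense3 H μ θ ∧ ∀ p : Finset V, p.card = 2 →
    degPair H p = 0 ∨ μ * Fintype.card V ≤ (degPair H p : ℝ)

/-- A tight Hamilton cycle: a cyclic ordering of all vertices in which every 3
cyclically consecutive vertices form an edge. -/
def IsTightHamCycle (H : Finset (Finset V)) (l : List V) : Prop :=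
  l.Nodup ∧ l.toFinset = Finset.univ ∧ 3 ≤ l.length ∧
  ∀ (i : ℕ) (h : i < l.length),
    ({l[i]'h, l[(i + 1) % l.length]'(Nat.mod_lt _ (by omega)),
      l[(i + 2) % l.length]'(Nat.mod_lt _ (by omega))} : Finset V) ∈ H

/-- `H ∗ K_t^{(3)}`: add `t` new vertices and all triples meeting them. -/
def starK (H : Finset (Finset V)) (t : ℕ) : Finset (Finset (V ⊕ Fin t)) :=
  (Finset.univ : Finset (Finset (V ⊕ Fin t))).filter fun e =>
    e.card = 3 ∧ ((∃ x ∈ e, x.isRight = true) ∨ ∃ f ∈ H, e = f.image Sum.inl)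

/-- The link of a vertex: the set of pairs forming an edge together with it. -/
def linkPairs (H : Finset (Finset V)) (u : V) : Set (Finset V) :=
  {p | p.card = 2 ∧ u ∉ p ∧ insert u p ∈ H}

section Matching

variable {α : Type*}

structure IsMaxMatching (H M : Finset (Finset α)) : Prop where
  subset : M ⊆ H
  pairwiseDisjoint : (M : Set (Finset α)).PairwiseDisjoint id
  card_le : ∀ M' ⊆ H, (M' : Set (Finset α)).PairwiseDisjoint id → M'.card ≤ M.card

theorem notMem_of_forall_disjoint {M : Finset (Finset α)} {x : Finset α} (hx : x.Nonempty)
    (hxM : ∀ f ∈ M, Disjoint x f) : x ∉ M := fun h => hx.ne_empty (disjoint_self.1 (hxM x h))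

theorem exists_isMaxMatching (H : Finset (Finset α)) : ∃ M, IsMaxMatching H M := by
  classical
  obtain ⟨M, hM, hmax⟩ := (H.powerset.filter fun M : Finset (Finset α) =>
    (M : Set (Finset α)).PairwiseDisjoint id).exists_max_image card ⟨∅, by simp⟩
  rw [mem_filter, mem_powerset] at hM
  exact ⟨M, hM.1, hM.2, fun M' hM'H hM' => hmax M' (mem_filter.2 ⟨mem_powerset.2 hM'H, hM'⟩)⟩

namespace IsMaxMatching

variable [DecidableEq α] {H M : Finset (Finset α)}

theorem card_lt_of_forall_disjoint (hM : IsMaxMatching H M) {M' : Finset (Finset α)}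
    (hM'H : M' ⊆ H) (hM' : (M' : Set (Finset α)).PairwiseDisjoint id) {x : Finset α} (hxH : x ∈ H)
    (hx : x.Nonempty) (hxM' : ∀ f ∈ M', Disjoint x f) : M'.card < M.card := by
  have hxM'' : x ∉ M' := notMem_of_forall_disjoint hx hxM'
  have := hM.card_le (insert x M') (insert_subset hxH hM'H)
    (by rw [coe_insert]; exact hM'.insert_of_notMem hxM'' hxM')
  rwa [card_insert_of_notMem hxM'', Nat.succ_le_iff] at this

theorem not_disjoint_biUnion (hM : IsMaxMatching H M) {f : Finset α} (hf : f ∈ H)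
    (hne : f.Nonempty) : ¬ Disjoint f (M.biUnion id) := fun hd =>
  (hM.card_lt_of_forall_disjoint hM.subset hM.pairwiseDisjoint hf hne
    fun _ hg => hd.mono_right (subset_biUnion_of_mem id hg)).false

theorem false_of_exchange (hM : IsMaxMatching H M) {e p q : Finset α} {a b : α}
    (he : e ∈ M) (ha : a ∈ e) (hb : b ∈ e) (hab : a ≠ b) (hp : Disjoint p (M.biUnion id))
    (hq : Disjoint q (M.biUnion id)) (hpq : Disjoint p q) (hpa : insert a p ∈ H)
    (hqb : insert b q ∈ H) : False := by
  have hsub : e ⊆ M.biUnion id := subset_biUnion_of_mem id he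
  have hdisj : ∀ f ∈ M.erase e, Disjoint e f := fun f hf =>
    hM.pairwiseDisjoint he (mem_of_mem_erase hf) (ne_of_mem_erase hf).symm
  have hpM : ∀ f ∈ M.erase e, Disjoint p f := fun f hf =>
    hp.mono_right (subset_biUnion_of_mem id (mem_of_mem_erase hf))
  have hqM : ∀ f ∈ M.erase e, Disjoint q f := fun f hf =>
    hq.mono_right (subset_biUnion_of_mem id (mem_of_mem_erase hf))
  have hbq : insert b q ∉ M.erase e := fun h =>
    disjoint_left.1 (hdisj _ h) hb (mem_insert_self b q)
  have hM' : ((insert (insert b q) (M.erase e) : Finset (Finset α)) :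
      Set (Finset α)).PairwiseDisjoint id := by
    rw [coe_insert]
    refine (hM.pairwiseDisjoint.subset (coe_subset.2 (erase_subset e M))).insert_of_notMem
      (mt mem_coe.1 hbq) fun f hf => ?_
    exact disjoint_insert_left.2
      ⟨disjoint_left.1 (hdisj f (mem_coe.1 hf)) hb, hqM f (mem_coe.1 hf)⟩
  have hcard : (insert (insert b q) (M.erase e)).card = M.card := by
    rw [card_insert_of_notMem hbq, card_erase_add_one he]
  refine (hcard ▸ hM.card_lt_of_forall_disjoint
    (insert_subset hqb ((erase_subset e M).trans hM.subset)) hM' hpa (insert_nonempty a p) ?_).false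
  intro f hf
  rcases mem_insert.1 hf with rfl | hf
  · refine disjoint_insert_left.2 ⟨?_, disjoint_insert_right.2 ⟨?_, hpq⟩⟩
    · exact mem_insert.not.2 <| not_or.2 ⟨hab, fun haq => disjoint_left.1 hq haq (hsub ha)⟩
    · exact fun hbp => disjoint_left.1 hp hbp (hsub hb)
  · exact disjoint_insert_left.2 ⟨disjoint_left.1 (hdisj f hf) ha, hpM f hf⟩

end IsMaxMatching

end Matching

section Counting

variable {α ι : Type*} [DecidableEq α]

theorem sum_le_card_add_two {P : Finset ι} {f : ι → ℕ} (hf : ∀ i ∈ P, f i ≤ 3)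
    (hP : (P.filter fun i => 2 ≤ f i).card ≤ 1) : ∑ i ∈ P, f i ≤ P.card + 2 :=
  calc ∑ i ∈ P, f i ≤ ∑ i ∈ P, (1 + 2 * if 2 ≤ f i then 1 else 0) :=
        sum_le_sum fun i hi => by have := hf i hi; split_ifs <;> omega
    _ = P.card + 2 * (P.filter fun i => 2 ≤ f i).card := by
        rw [sum_add_distrib, ← mul_sum, card_filter, sum_const, smul_eq_mul, mul_one]
    _ ≤ P.card + 2 := by omega

theorem exists_two_le_card_inter_of_lt {M : Finset (Finset α)} (hM3 : ∀ e ∈ M, e.card ≤ 3)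
    (hM : (M : Set (Finset α)).PairwiseDisjoint id) {P : Finset ι} {S : ι → Finset α}
    (hS : ∀ i ∈ P, S i ⊆ M.biUnion id) (hlt : (P.card + 2) * M.card < ∑ i ∈ P, (S i).card) :
    ∃ e ∈ M, ∃ i ∈ P, ∃ j ∈ P, i ≠ j ∧ 2 ≤ (e ∩ S i).card ∧ 2 ≤ (e ∩ S j).card := by
  by_contra! h
  have hsplit : ∀ i ∈ P, (S i).card = ∑ e ∈ M, (e ∩ S i).card := fun i hi =>
    calc (S i).card = (M.biUnion id ∩ S i).card := by rw [inter_eq_right.2 (hS i hi)]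
      _ = ∑ e ∈ M, (e ∩ S i).card := by
          rw [biUnion_inter]; exact card_biUnion (hM.mono fun e => inter_subset_left)
  have hedge : ∀ e ∈ M, ∑ i ∈ P, (e ∩ S i).card ≤ P.card + 2 := fun e he =>
    sum_le_card_add_two (fun i _ => (card_le_card inter_subset_left).trans (hM3 e he))
      (card_le_one.2 fun i hi j hj => by
        by_contra hij
        exact (h e he i (mem_filter.1 hi).1 j (mem_filter.1 hj).1 hij (mem_filter.1 hi).2).not_ge
          (mem_filter.1 hj).2)
  have hsum : ∑ i ∈ P, (S i).card ≤ (P.card + 2) * M.card :=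
    calc ∑ i ∈ P, (S i).card = ∑ e ∈ M, ∑ i ∈ P, (e ∩ S i).card := by
          rw [sum_congr rfl hsplit, sum_comm]
      _ ≤ ∑ _e ∈ M, (P.card + 2) := sum_le_sum hedge
      _ = (P.card + 2) * M.card := by rw [sum_const, smul_eq_mul, mul_comm]
  omega

theorem exists_pairwiseDisjoint_subset_powersetCard_two_sdiff (U : Finset α)
    (B : Finset (Finset α)) : ∀ k : ℕ, B.card < (U.card - 2 * k).choose 2 →
      ∃ P ⊆ U.powersetCard 2 \ B, P.card = k ∧ (P : Set (Finset α)).PairwiseDisjoint id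
  | 0, _ => ⟨∅, empty_subset _, card_empty, by simp⟩
  | k + 1, hB => by
    obtain ⟨P, hPU, hPk, hP⟩ := exists_pairwiseDisjoint_subset_powersetCard_two_sdiff U B k
      (hB.trans_le (Nat.choose_le_choose 2 (by omega)))
    have hcover : (P.biUnion id).card ≤ 2 * k := by
      refine card_biUnion_le.trans (le_of_eq ?_)
      rw [sum_const_nat (f := fun p => (id p).card)
        fun p hp => (mem_powersetCard.1 (mem_sdiff.1 (hPU hp)).1).2, hPk, mul_comm]
    have hfree : U.card - 2 * (k + 1) ≤ (U \ P.biUnion id).card := by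
      have := le_card_sdiff (P.biUnion id) U
      omega
    obtain ⟨p, hp, hpB⟩ := exists_mem_notMem_of_card_lt_card (s := B)
      (t := (U \ P.biUnion id).powersetCard 2)
      (by rw [card_powersetCard]; exact hB.trans_le (Nat.choose_le_choose 2 hfree))
    obtain ⟨hpU, hp2⟩ := mem_powersetCard.1 hp
    have hpP : ∀ q ∈ P, Disjoint p q := fun q hq =>
      (disjoint_of_subset_left hpU sdiff_disjoint).mono_right (subset_biUnion_of_mem id hq)
    have hpP' : p ∉ P := notMem_of_forall_disjoint (card_pos.1 (by omega)) hpP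
    refine ⟨insert p P, insert_subset (mem_sdiff.2 ⟨mem_powersetCard.2
      ⟨hpU.trans sdiff_subset, hp2⟩, hpB⟩) hPU, by rw [card_insert_of_notMem hpP', hPk], ?_⟩
    rw [coe_insert]
    exact hP.insert_of_notMem hpP' hpP

end Counting

def pairNbhd (H : Finset (Finset V)) (p : Finset V) : Finset V :=
  univ.filter fun w => w ∉ p ∧ insert w p ∈ H

theorem degPair_le_card_pairNbhd {H : Finset (Finset V)} (hH3 : ∀ e ∈ H, e.card = 3)
    {p : Finset V} (hp : p.card = 2) : degPair H p ≤ (pairNbhd H p).card := by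
  refine card_le_card_of_surjOn (fun w => insert w p) fun e he => ?_
  obtain ⟨heH, hpe⟩ := mem_filter.1 (mem_coe.1 he)
  obtain ⟨w, hw⟩ := card_eq_one.1 (by rw [card_sdiff_of_subset hpe, hH3 e heH, hp] :
    (e \ p).card = 1)
  have hwe : insert w p = e := by
    rw [insert_eq, ← hw, union_comm, union_sdiff_of_subset hpe]
  have hwp : w ∉ p := (mem_sdiff.1 (hw ▸ mem_singleton_self w : w ∈ e \ p)).2
  exact ⟨w, mem_filter.2 ⟨mem_univ w, hwp, hwe ▸ heH⟩, hwe⟩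

theorem IsMaxMatching.sum_card_pairNbhd_le {H M : Finset (Finset V)}
    (hH3 : ∀ e ∈ H, e.card = 3) (hM : IsMaxMatching H M) {P : Finset (Finset V)}
    (hP : (P : Set (Finset V)).PairwiseDisjoint id) (hPM : ∀ p ∈ P, Disjoint p (M.biUnion id)) :
    ∑ p ∈ P, (pairNbhd H p).card ≤ (P.card + 2) * M.card := by
  have hN : ∀ p ∈ P, pairNbhd H p ⊆ M.biUnion id := fun p hp w hw => by
    by_contra hwM
    exact hM.not_disjoint_biUnion (mem_filter.1 hw).2.2 (insert_nonempty w p)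
      (disjoint_insert_left.2 ⟨hwM, hPM p hp⟩)
  by_contra! hlt
  obtain ⟨e, he, p, hp, q, hq, hpq, hpe, hqe⟩ := exists_two_le_card_inter_of_lt
    (fun e he => (hH3 e (hM.subset he)).le) hM.pairwiseDisjoint hN hlt
  obtain ⟨a, ha⟩ := card_pos.1 (by omega : 0 < (e ∩ pairNbhd H p).card)
  obtain ⟨b, hb, hba⟩ := exists_mem_ne (by omega : 1 < (e ∩ pairNbhd H q).card) a
  rw [mem_inter, pairNbhd, mem_filter] at ha hb
  exact hM.false_of_exchange he ha.1 hb.1 hba.symm (hPM p hp) (hPM q hq) (hP hp hq hpq)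
    ha.2.2.2 hb.2.2.2

noncomputable def lowPairs (H : Finset (Finset V)) (μ : ℝ) : Finset (Finset V) :=
  (univ.powersetCard 2).filter fun p => (degPair H p : ℝ) < μ * Fintype.card V

theorem Dense3.card_lowPairs_le {H : Finset (Finset V)} {μ ε : ℝ} (h : Dense3 H μ ε) :
    ((lowPairs H μ).card : ℝ) ≤ ε * (Fintype.card V).choose 2 := by
  have hset : {p : Finset V | p.card = 2 ∧ (degPair H p : ℝ) < μ * Fintype.card V} =
      ↑(lowPairs H μ) := by
    ext p
    simp [lowPairs, mem_powersetCard]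
  rw [Dense3, hset, Set.ncard_coe_finset] at h
  exact h

theorem Dense3.card_lowPairs_lt_choose_two {H : Finset (Finset V)} {μ ε : ℝ}
    (h : Dense3 H μ ε) (hε : 0 ≤ ε) {m : ℕ} (hm : 2 ≤ m)
    (hεm : ε * Fintype.card V ^ 2 ≤ m ^ 2 / 4) : (lowPairs H μ).card < m.choose 2 := by
  have hlow := h.card_lowPairs_le
  have hm' : (2 : ℝ) ≤ m := by exact_mod_cast hm
  rw [Nat.cast_choose_two] at hlow
  suffices ((lowPairs H μ).card : ℝ) < m.choose 2 by exact_mod_cast this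
  rw [Nat.cast_choose_two]
  have hn : (0 : ℝ) ≤ Fintype.card V := Nat.cast_nonneg _
  nlinarith [mul_nonneg hε hn]

theorem IsMaxMatching.three_mul_card_mul_le_two {H M : Finset (Finset V)}
    (hH3 : ∀ e ∈ H, e.card = 3) (hM : IsMaxMatching H M) {δ : ℝ} {P : Finset (Finset V)}
    (hP : (P : Set (Finset V)).PairwiseDisjoint id)
    (hPU : P ⊆ (univ \ M.biUnion id).powersetCard 2 \ lowPairs H (1 / 3 + δ)) :
    3 * P.card * δ ≤ 2 := by
  have hgood : ∀ p ∈ P, p.card = 2 ∧ Disjoint p (M.biUnion id) ∧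
      (1 / 3 + δ) * Fintype.card V ≤ degPair H p := fun p hp => by
    obtain ⟨hpU, hplow⟩ := mem_sdiff.1 (hPU hp)
    obtain ⟨hpU, hp2⟩ := mem_powersetCard.1 hpU
    exact ⟨hp2, disjoint_of_subset_left hpU sdiff_disjoint, not_lt.1 fun hlt =>
      hplow (mem_filter.2 ⟨mem_powersetCard.2 ⟨subset_univ p, hp2⟩, hlt⟩)⟩
  obtain rfl | ⟨p₀, hp₀⟩ := P.eq_empty_or_nonempty
  · simp
  obtain ⟨w, -⟩ := card_pos.1 (by rw [(hgood p₀ hp₀).1]; omega : 0 < p₀.card)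
  have hn : (0 : ℝ) < Fintype.card V := Nat.cast_pos.2 (Fintype.card_pos_iff.2 ⟨w⟩)
  have hM3 : 3 * M.card ≤ Fintype.card V := by
    have := card_le_univ (M.biUnion id)
    rwa [card_biUnion hM.pairwiseDisjoint,
      sum_const_nat (f := fun e => (id e).card) fun e he => hH3 e (hM.subset he), mul_comm]
      at this
  have hupper := hM.sum_card_pairNbhd_le hH3 hP fun p hp => (hgood p hp).2.1
  have hlower : P.card * ((1 / 3 + δ) * Fintype.card V) ≤
      ∑ p ∈ P, ((pairNbhd H p).card : ℝ) := by
    rw [← nsmul_eq_mul, ← sum_const]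
    exact sum_le_sum fun p hp => (hgood p hp).2.2.trans
      (by exact_mod_cast degPair_le_card_pairNbhd hH3 (hgood p hp).1)
  have hupper' : ∑ p ∈ P, ((pairNbhd H p).card : ℝ) ≤ (P.card + 2) * M.card := by
    exact_mod_cast hupper
  have hM3' : 3 * (M.card : ℝ) ≤ Fintype.card V := by exact_mod_cast hM3
  refine le_of_mul_le_mul_right ?_ hn
  nlinarith

theorem statement15 :
    ∀ α θ : ℝ, 0 < α → 0 < θ → ∃ ε₀ : ℝ, 0 < ε₀ ∧ ∃ n₀ : ℕ,
    ∀ ε : ℝ, 0 < ε → ε ≤ ε₀ → ∀ n : ℕ, n₀ ≤ n →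
    ∀ H : Finset (Finset (Fin n)), (∀ e ∈ H, e.card = 3) →
    Dense3 H (1 / 3 + α) ε →
    ∃ M ⊆ H, (∀ e ∈ M, ∀ f ∈ M, e ≠ f → Disjoint e f) ∧
      (n : ℝ) - ((M.biUnion id).card : ℝ) ≤ θ * n := by
  intro α θ hα hθ
  obtain ⟨k, hk⟩ : ∃ k : ℕ, 1 ≤ k * α := ⟨⌈α⁻¹⌉₊, (inv_le_iff_one_le_mul₀ hα).1 (Nat.le_ceil _)⟩
  refine ⟨θ ^ 2 / 16, by positivity, ⌈4 * (k + 1) / θ⌉₊,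
    fun ε hε hεθ n hn H hH3 hdense => ?_⟩
  have hθn : 4 * (k + 1) ≤ θ * n := by
    rw [mul_comm θ, ← div_le_iff₀ hθ]
    exact (Nat.le_ceil _).trans (Nat.cast_le.2 hn)
  obtain ⟨M, hM⟩ := exists_isMaxMatching H
  refine ⟨M, hM.subset, hM.pairwiseDisjoint, ?_⟩
  by_contra! hcov
  set U := univ \ M.biUnion id
  have hU : θ * n < U.card := by
    rwa [card_univ_sdiff, Fintype.card_fin,
      Nat.cast_sub ((card_le_univ _).trans_eq (Fintype.card_fin n))]
  have h2k : 2 * k ≤ U.card := by exact_mod_cast (by linarith : (2 * k : ℝ) ≤ U.card)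
  have hm : θ * n ≤ 2 * (U.card - 2 * k : ℕ) := by push_cast [Nat.cast_sub h2k]; linarith
  obtain ⟨P, hPU, rfl, hP⟩ := exists_pairwiseDisjoint_subset_powersetCard_two_sdiff U
    (lowPairs H (1 / 3 + α)) k <| hdense.card_lowPairs_lt_choose_two hε.le
      (by exact_mod_cast (by linarith : (2 : ℝ) ≤ (U.card - 2 * k : ℕ)))
      (by rw [Fintype.card_fin]; nlinarith)
  linarith [hM.three_mul_card_mul_le_two hH3 hP hPU]
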